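/- arXiv:math/0508197 — 8 statements merged into one kernel-verified Lean document; each statement's English description precedes it below -/
import Mathlib

section
/- Let A ∈ ℂ^{n×n}, ν = ind A, and let u ≥ ν be a nonnegative integer. Let φ(λ) = λ^t(λ^q + p₁λ^{q−1} + ⋯ + p_q), with nonnegative integers t, q and p₁,…,p_q ∈ ℂ, p_q ≠ 0, be a nonzero polynomial annihilating A^u, i.e., φ(A^u) = 0. Define h(λ) = p_q^{−1}(λ^q + p₁λ^{q−1} + ⋯ + p_q) and Z = h(A^u). Then Z is idempotent: Z² = Z. -/
open Matrix Polynomial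

/-- Let `ν = ind A`, `u ≥ ν`, and let `φ(λ) = λ^t · ψ(λ)` be a nonzero annihilating
polynomial of `A ^ u`, where `ψ(λ) = λ^q + p₁λ^{q-1} + ⋯ + p_q` is monic with nonzero
constant term `p_q = ψ.coeff 0`. Then `Z = h(A ^ u)`, with `h(λ) = p_q⁻¹ · ψ(λ)`,
is idempotent. -/
theorem eigenprojection_candidate_idempotent {n : ℕ} (A : Matrix (Fin n) (Fin n) ℂ)
    (ν u : ℕ) (hν : IsLeast {k : ℕ | (A ^ (k + 1)).rank = (A ^ k).rank} ν)
    (hu : ν ≤ u)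
    (t : ℕ) (ψ : Polynomial ℂ) (hmonic : ψ.Monic) (hconst : ψ.coeff 0 ≠ 0)
    (hann : Polynomial.aeval (A ^ u) (Polynomial.X ^ t * ψ) = 0)
    (Z : Matrix (Fin n) (Fin n) ℂ)
    (hZ : Z = Polynomial.aeval (A ^ u) (Polynomial.C (ψ.coeff 0)⁻¹ * ψ)) :
    Z * Z = Z := by
  set B := A ^ u with hB
  set M := Polynomial.aeval B ψ with hM
  set c := ψ.coeff 0 with hc
  -- kernels stabilize at ν
  have hle : LinearMap.ker (A ^ ν).mulVecLin ≤ LinearMap.ker (A ^ (ν + 1)).mulVecLin := by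
    intro x hx
    simp only [LinearMap.mem_ker] at hx ⊢
    rw [pow_succ', mulVecLin_mul, LinearMap.comp_apply, hx, map_zero]
  have hker1 : LinearMap.ker (A ^ (ν + 1)).mulVecLin = LinearMap.ker (A ^ ν).mulVecLin := by
    symm
    apply Submodule.eq_of_le_of_finrank_eq hle
    have h1 := LinearMap.finrank_range_add_finrank_ker (A ^ ν).mulVecLin
    have h2 := LinearMap.finrank_range_add_finrank_ker (A ^ (ν + 1)).mulVecLin
    have hr : (A ^ (ν + 1)).rank = (A ^ ν).rank := hν.1
    rw [Matrix.rank] at hr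
    rw [Matrix.rank] at hr
    omega
  have hstab : ∀ m (x : Fin n → ℂ), (A ^ (ν + m)) *ᵥ x = 0 → (A ^ ν) *ᵥ x = 0 := by
    intro m
    induction m with
    | zero => intro x hx; simpa using hx
    | succ m ih =>
      intro x hx
      have h1 : (A ^ (ν + 1)) *ᵥ ((A ^ m) *ᵥ x) = 0 := by
        rw [mulVec_mulVec, ← pow_add]
        rw [show ν + 1 + m = ν + (m + 1) by omega]
        exact hx
      have h2 : (A ^ ν) *ᵥ ((A ^ m) *ᵥ x) = 0 := by
        have := hker1.le (show _ ∈ LinearMap.ker (A ^ (ν + 1)).mulVecLin from h1)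
        exact this
      apply ih
      rw [mulVec_mulVec, ← pow_add] at h2
      exact h2
  -- key: B * M = 0
  have hannB : B ^ t * M = 0 := by
    have := hann
    rw [_root_.map_mul, map_pow, aeval_X] at this
    exact this
  have hBM : B * M = 0 := by
    rcases Nat.eq_zero_or_pos t with ht | ht
    · have : M = 0 := by simpa [ht] using hannB
      rw [this, mul_zero]
    rcases Nat.eq_zero_or_pos u with hu0 | hu0
    · have hB1 : B = 1 := by rw [hB, hu0, pow_zero]
      have : M = 0 := by simpa [hB1] using hannB
      rw [this, mul_zero]
    · -- general case: for each column vector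
      ext i j
      have hcol : (B * M) *ᵥ Pi.single j 1 = 0 := by
        have hx : (A ^ (u * t)) *ᵥ (M *ᵥ Pi.single j 1) = 0 := by
          rw [mulVec_mulVec, pow_mul, ← hB, hannB, zero_mulVec]
        have hνx : (A ^ ν) *ᵥ (M *ᵥ Pi.single j 1) = 0 := by
          have hge : ν ≤ u * t := le_trans hu (Nat.le_mul_of_pos_right u ht)
          have := hstab (u * t - ν) (M *ᵥ Pi.single j 1)
          rw [show ν + (u * t - ν) = u * t by omega] at this
          exact this hx
        have : (A ^ u) *ᵥ (M *ᵥ Pi.single j 1) = 0 := by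
          rw [show u = (u - ν) + ν by omega, pow_add, ← mulVec_mulVec, hνx,
            mulVec_zero]
        rw [← mulVec_mulVec, hB]
        exact this
      have := congrFun hcol i
      simpa using this
  -- commuting: M * B = B * M
  have hcomm : M * B = B * M := by
    have h1 : Polynomial.aeval B (ψ * Polynomial.X) = M * B := by
      rw [_root_.map_mul, aeval_X, hM]
    have h2 : Polynomial.aeval B (Polynomial.X * ψ) = B * M := by
      rw [_root_.map_mul, aeval_X, hM]
    rw [← h1, ← h2, mul_comm ψ]
  -- M * M = c • M
  have hMM : M * M = c • M := by
    have hψ : Polynomial.X * ψ.divX + Polynomial.C c = ψ := Polynomial.X_mul_divX_add ψ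
    have hMdecomp : M = B * Polynomial.aeval B ψ.divX + c • 1 := by
      conv_lhs => rw [hM, ← hψ]
      rw [map_add, _root_.map_mul, aeval_X, aeval_C, Algebra.algebraMap_eq_smul_one]
    calc M * M = M * (B * Polynomial.aeval B ψ.divX + c • 1) := by rw [← hMdecomp]
      _ = M * B * Polynomial.aeval B ψ.divX + c • M := by
          rw [mul_add, mul_assoc]; congr 1; rw [mul_smul_comm, mul_one]
      _ = c • M := by rw [hcomm, hBM, zero_mul, zero_add]
  -- conclude
  have hZM : Z = c⁻¹ • M := by
    rw [hZ, _root_.map_mul, aeval_C, Algebra.algebraMap_eq_smul_one, smul_mul_assoc, one_mul, ← hM, hc]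
  rw [hZM, smul_mul_smul_comm, hMM, smul_smul]
  congr 1
  field_simp
end

section
/- Let A ∈ ℂ^{n×n}, ν = ind A, and let u ≥ ν be a nonnegative integer. Let φ(λ) = λ^t(λ^q + p₁λ^{q−1} + ⋯ + p_q), with nonnegative integers t, q and p₁,…,p_q ∈ ℂ, p_q ≠ 0, be a nonzero polynomial annihilating A^u, i.e., φ(A^u) = 0. Define h(λ) = p_q^{−1}(λ^q + p₁λ^{q−1} + ⋯ + p_q) and Z = h(A^u). Then the matrix A·Z is nilpotent; moreover, if u ≥ 1 then (A·Z)^u = 0. -/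
open Matrix Polynomial

private lemma commute_aeval' {R A : Type*} [CommSemiring R] [Semiring A] [Algebra R A]
    {a b : A} (h : Commute a b) (p : R[X]) : Commute a (Polynomial.aeval b p) := by
  induction p using Polynomial.induction_on' with
  | add p q hp hq => simpa [map_add] using hp.add_right hq
  | monomial k c =>
      rw [Polynomial.aeval_monomial]
      exact Commute.mul_right ((Algebra.commutes c a).symm) (h.pow_right k)

private lemma mulVecLin_pow' {n : ℕ} (A : Matrix (Fin n) (Fin n) ℂ) (k : ℕ) :
    (A ^ k).mulVecLin = (A.mulVecLin) ^ k := by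
  induction k with
  | zero => rw [pow_zero, pow_zero, Matrix.mulVecLin_one]; rfl
  | succ k ih => rw [pow_succ, Matrix.mulVecLin_mul, ih, pow_succ]; rfl

private lemma mulVecLin_eq_zero_iff {n : ℕ} {M : Matrix (Fin n) (Fin n) ℂ} :
    M.mulVecLin = 0 ↔ M = 0 := by
  constructor
  · intro h
    ext i j
    have h2 := LinearMap.congr_fun h (Pi.single j 1)
    simpa [Matrix.mulVecLin_apply, Matrix.mulVec_single] using congrFun h2 i
  · rintro rfl; exact Matrix.mulVecLin_zero

/-- Kernel stabilization: if rank A^{ν+1} = rank A^ν then for every m ≥ ν,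
A^m * Y = 0 implies A^u * Y = 0, whenever ν ≤ u. -/
private lemma ker_stab {n : ℕ} (A : Matrix (Fin n) (Fin n) ℂ) {ν : ℕ}
    (h : (A ^ (ν + 1)).rank = (A ^ ν).rank) {u m : ℕ} (hu : ν ≤ u) (hm : ν ≤ m)
    (Y : Matrix (Fin n) (Fin n) ℂ) (hY : A ^ m * Y = 0) : A ^ u * Y = 0 := by
  set f := A.mulVecLin with hf
  have hker : ∀ k, LinearMap.ker (f ^ ν) = LinearMap.ker (f ^ (ν + k)) := by
    apply Module.End.ker_pow_constant
    -- ker (f^ν) = ker (f^(ν+1))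
    have hle : LinearMap.ker (f ^ ν) ≤ LinearMap.ker (f ^ (ν + 1)) := by
      rw [pow_succ']
      exact LinearMap.ker_le_ker_comp _ _
    have hrank : Module.finrank ℂ (LinearMap.range (f ^ (ν + 1))) =
        Module.finrank ℂ (LinearMap.range (f ^ ν)) := by
      rw [← mulVecLin_pow', ← mulVecLin_pow']
      exact h
    have h1 := LinearMap.finrank_range_add_finrank_ker (f ^ (ν + 1))
    have h2 := LinearMap.finrank_range_add_finrank_ker (f ^ ν)
    have hkr : Module.finrank ℂ (LinearMap.ker (f ^ ν)) =
        Module.finrank ℂ (LinearMap.ker (f ^ (ν + 1))) := by omega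
    exact Submodule.eq_of_le_of_finrank_eq hle hkr
  have hkm : LinearMap.ker (f ^ m) = LinearMap.ker (f ^ u) := by
    obtain ⟨a, rfl⟩ := Nat.exists_eq_add_of_le hm
    obtain ⟨b, rfl⟩ := Nat.exists_eq_add_of_le hu
    rw [← hker a, hker b]
  -- transfer
  have hm0 : (A ^ m).mulVecLin.comp Y.mulVecLin = 0 := by
    rw [← Matrix.mulVecLin_mul, hY, Matrix.mulVecLin_zero]
  rw [← mulVecLin_eq_zero_iff, Matrix.mulVecLin_mul]
  rw [← LinearMap.range_le_ker_iff] at hm0 ⊢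
  rw [mulVecLin_pow'] at hm0 ⊢
  rw [← hkm]
  exact hm0

/-- Let `ν = ind A`, `u ≥ ν`, and let `φ(λ) = λ^t · ψ(λ)` be a nonzero annihilating
polynomial of `A ^ u`, where `ψ(λ) = λ^q + p₁λ^{q-1} + ⋯ + p_q` is monic with nonzero
constant term `p_q = ψ.coeff 0`. Then for `Z = h(A ^ u)`, with `h(λ) = p_q⁻¹ · ψ(λ)`,
the matrix `A * Z` is nilpotent; moreover `(A * Z) ^ u = 0` whenever `u ≥ 1`. -/
theorem eigenprojection_candidate_mul_nilpotent {n : ℕ} (A : Matrix (Fin n) (Fin n) ℂ)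
    (ν u : ℕ) (hν : IsLeast {k : ℕ | (A ^ (k + 1)).rank = (A ^ k).rank} ν)
    (hu : ν ≤ u)
    (t : ℕ) (ψ : Polynomial ℂ) (hmonic : ψ.Monic) (hconst : ψ.coeff 0 ≠ 0)
    (hann : Polynomial.aeval (A ^ u) (Polynomial.X ^ t * ψ) = 0)
    (Z : Matrix (Fin n) (Fin n) ℂ)
    (hZ : Z = Polynomial.aeval (A ^ u) (Polynomial.C (ψ.coeff 0)⁻¹ * ψ)) :
    IsNilpotent (A * Z) ∧ (1 ≤ u → (A * Z) ^ u = 0) := by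
  have hcomm : Commute A Z := by
    rw [hZ]
    exact commute_aeval' ((Commute.refl A).pow_right u) _
  have h1 : (A ^ u) ^ t * Polynomial.aeval (A ^ u) ψ = 0 := by
    simpa [_root_.map_mul, map_pow] using hann
  have hZ' : Z = (ψ.coeff 0)⁻¹ • Polynomial.aeval (A ^ u) ψ := by
    rw [hZ, _root_.map_mul, Polynomial.aeval_C, ← Algebra.smul_def]
  have hBt : (A ^ u) ^ t * Z = 0 := by
    rw [hZ', Matrix.mul_smul, h1, smul_zero]
  -- degenerate cases: t = 0 or u = 0 force Z = 0
  by_cases hdeg : t = 0 ∨ u = 0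
  · have hZ0 : Z = 0 := by
      rcases hdeg with rfl | rfl
      · simpa using hBt
      · simpa using hBt
    subst hZ0
    refine ⟨⟨1, by simp⟩, fun hu1 => ?_⟩
    rw [mul_zero]
    exact zero_pow (by omega)
  push_neg at hdeg
  obtain ⟨ht1, hu1⟩ := hdeg
  have hu1' : 1 ≤ u := Nat.one_le_iff_ne_zero.mpr hu1
  -- main case
  have hut : A ^ (u * t) * Z = 0 := by rwa [pow_mul]
  have hmν : ν ≤ u * t := le_trans hu (Nat.le_mul_of_pos_right u (by omega))
  have hAuZ : A ^ u * Z = 0 := ker_stab A hν.1 hu hmν Z hut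
  have key : (A * Z) ^ u = 0 := by
    obtain ⟨v, rfl⟩ := Nat.exists_eq_add_of_le hu1'
    rw [hcomm.mul_pow, pow_add Z 1 v, pow_one, ← mul_assoc, hAuZ, zero_mul]
  exact ⟨⟨u, key⟩, fun _ => key⟩
end

section
/- Let A ∈ ℂ^{n×n}, ν = ind A, and let u ≥ ν be a nonnegative integer. Let φ(λ) = λ^t(λ^q + p₁λ^{q−1} + ⋯ + p_q), with nonnegative integers t, q and p₁,…,p_q ∈ ℂ, p_q ≠ 0, be a nonzero polynomial annihilating A^u, i.e., φ(A^u) = 0. Define h(λ) = p_q^{−1}(λ^q + p₁λ^{q−1} + ⋯ + p_q) and Z = h(A^u). If A is singular (det A = 0), then Z ≠ 0. -/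
open Matrix Polynomial

/-- Let `ν = ind A`, `u ≥ ν`, and let `φ(λ) = λ^t · ψ(λ)` be a nonzero annihilating
polynomial of `A ^ u`, where `ψ(λ) = λ^q + p₁λ^{q-1} + ⋯ + p_q` is monic with nonzero
constant term `p_q = ψ.coeff 0`. If `A` is singular, then `Z = h(A ^ u)`, with
`h(λ) = p_q⁻¹ · ψ(λ)`, is nonzero. -/
theorem eigenprojection_candidate_ne_zero {n : ℕ} (A : Matrix (Fin n) (Fin n) ℂ)
    (ν u : ℕ) (hν : IsLeast {k : ℕ | (A ^ (k + 1)).rank = (A ^ k).rank} ν)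
    (hu : ν ≤ u)
    (t : ℕ) (ψ : Polynomial ℂ) (hmonic : ψ.Monic) (hconst : ψ.coeff 0 ≠ 0)
    (hann : Polynomial.aeval (A ^ u) (Polynomial.X ^ t * ψ) = 0)
    (Z : Matrix (Fin n) (Fin n) ℂ)
    (hZ : Z = Polynomial.aeval (A ^ u) (Polynomial.C (ψ.coeff 0)⁻¹ * ψ))
    (hsing : A.det = 0) :
    Z ≠ 0 := by
  intro hZ0
  -- From Z = 0 deduce ψ(A^u) = 0
  have hψ0 : Polynomial.aeval (A ^ u) ψ = 0 := by
    have : (ψ.coeff 0)⁻¹ • Polynomial.aeval (A ^ u) ψ = 0 := by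
      rw [hZ0] at hZ
      rw [_root_.map_mul, Polynomial.aeval_C] at hZ
      simpa [Algebra.smul_def] using hZ.symm
    rcases smul_eq_zero.mp this with h | h
    · exact absurd h (inv_ne_zero hconst)
    · exact h
  -- ψ = X * ψ.divX + C (ψ.coeff 0)
  have hdecomp : Polynomial.X * ψ.divX + Polynomial.C (ψ.coeff 0) = ψ :=
    Polynomial.X_mul_divX_add ψ
  have key : (A ^ u) * ((-(ψ.coeff 0)⁻¹) • Polynomial.aeval (A ^ u) ψ.divX) = 1 := by
    have h1 : Polynomial.aeval (A ^ u) (Polynomial.X * ψ.divX + Polynomial.C (ψ.coeff 0)) = 0 :=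
      by rw [hdecomp]; exact hψ0
    rw [map_add, _root_.map_mul, Polynomial.aeval_X, Polynomial.aeval_C, Algebra.algebraMap_eq_smul_one]
      at h1
    have h2 : (A ^ u) * Polynomial.aeval (A ^ u) ψ.divX = -(ψ.coeff 0 • 1) := by
      rw [eq_neg_iff_add_eq_zero]; exact h1
    rw [Matrix.mul_smul, h2]
    simp [smul_smul, inv_mul_cancel₀ hconst]
  have hdetu : (A ^ u).det ≠ 0 := by
    intro h
    have := congrArg Matrix.det key
    rw [Matrix.det_mul, h, zero_mul, Matrix.det_one] at this
    exact zero_ne_one this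
  rcases Nat.eq_zero_or_pos u with hu0 | hupos
  · -- then ν = 0, so rank A = rank 1 = n, so A is invertible
    have hν0 : ν = 0 := Nat.le_zero.mp (hu0 ▸ hu)
    have hrank : (A ^ 1).rank = (A ^ 0).rank := by
      have := hν.1; rw [hν0] at this; exact this
    rw [pow_one, pow_zero, Matrix.rank_one] at hrank
    -- rank A = card n means mulVecLin is surjective
    have hsurj : Function.Surjective A.mulVec := by
      have htop : LinearMap.range A.mulVecLin = ⊤ := by
        apply Submodule.eq_top_of_finrank_eq
        rw [← Matrix.rank, hrank, Module.finrank_pi]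
      intro v
      obtain ⟨w, hw⟩ := LinearMap.range_eq_top.mp htop v
      exact ⟨w, hw⟩
    have : IsUnit A := Matrix.mulVec_surjective_iff_isUnit.mp hsurj
    exact ((Matrix.isUnit_iff_isUnit_det A).mp this).ne_zero hsing
  · apply hdetu
    rw [Matrix.det_pow, hsing, zero_pow hupos.ne']
end

section
/- Let A ∈ ℂ^{n×n}, ν = ind A, and let u ≥ ν be a nonnegative integer. Let φ(λ) = λ^t(λ^q + p₁λ^{q−1} + ⋯ + p_q), with nonnegative integers t, q and p₁,…,p_q ∈ ℂ, p_q ≠ 0, be a nonzero polynomial annihilating A^u, i.e., φ(A^u) = 0. Define h(λ) = p_q^{−1}(λ^q + p₁λ^{q−1} + ⋯ + p_q) and Z = h(A^u). Then A^u·Z = Z·A^u = 0; equivalently, the polynomial λ·h(λ) also annihilates A^u. -/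
open Matrix Polynomial

/-- Let `ν = ind A`, `u ≥ ν`, and let `φ(λ) = λ^t · ψ(λ)` be a nonzero annihilating
polynomial of `A ^ u`, where `ψ(λ) = λ^q + p₁λ^{q-1} + ⋯ + p_q` is monic with nonzero
constant term `p_q = ψ.coeff 0`. Then for `Z = h(A ^ u)`, with `h(λ) = p_q⁻¹ · ψ(λ)`,
one has `A ^ u * Z = Z * A ^ u = 0`; equivalently, `λ · h(λ)` annihilates `A ^ u`. -/
theorem eigenprojection_candidate_annihilated {n : ℕ} (A : Matrix (Fin n) (Fin n) ℂ)
    (ν u : ℕ) (hν : IsLeast {k : ℕ | (A ^ (k + 1)).rank = (A ^ k).rank} ν)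
    (hu : ν ≤ u)
    (t : ℕ) (ψ : Polynomial ℂ) (hmonic : ψ.Monic) (hconst : ψ.coeff 0 ≠ 0)
    (hann : Polynomial.aeval (A ^ u) (Polynomial.X ^ t * ψ) = 0)
    (Z : Matrix (Fin n) (Fin n) ℂ)
    (hZ : Z = Polynomial.aeval (A ^ u) (Polynomial.C (ψ.coeff 0)⁻¹ * ψ)) :
    A ^ u * Z = 0 ∧ Z * A ^ u = 0 ∧
      Polynomial.aeval (A ^ u)
        (Polynomial.X * (Polynomial.C (ψ.coeff 0)⁻¹ * ψ)) = 0 := by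
  set B := A ^ u with hB
  set M := Polynomial.aeval B ψ with hM
  -- Step 1: B * M = 0.
  have key : B * M = 0 := by
    rcases Nat.eq_zero_or_pos t with ht | ht
    · have : M = 0 := by simpa [ht, hM] using hann
      simp [this]
    rcases Nat.eq_zero_or_pos u with hu0 | hu0
    · have hB1 : B = 1 := by simp [hB, hu0]
      have : M = 0 := by
        have := hann
        rw [_root_.map_mul, map_pow, aeval_X] at this
        simpa [hB1, hM] using this
      simp [this]
    -- main case : u ≥ 1, t ≥ 1
    set f := A.mulVecLin with hf
    have hpow : ∀ k : ℕ, (A ^ k).mulVecLin = f ^ k := by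
      intro k
      induction k with
      | zero => simp [hf, Module.End.one_eq_id]
      | succ k ih => rw [pow_succ, Matrix.mulVecLin_mul, ih, pow_succ, Module.End.mul_eq_comp]
    -- kernels stabilize from ν on
    have hker0 : LinearMap.ker (f ^ ν) = LinearMap.ker (f ^ (ν + 1)) := by
      have hle : LinearMap.ker (f ^ ν) ≤ LinearMap.ker (f ^ (ν + 1)) := by
        intro x hx
        have : f ^ (ν + 1) = f ∘ₗ f ^ ν := by rw [pow_succ', Module.End.mul_eq_comp]
        simp only [LinearMap.mem_ker] at hx ⊢
        rw [this, LinearMap.comp_apply, hx, map_zero]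
      have hrk : (A ^ (ν + 1)).rank = (A ^ ν).rank := hν.1
      have h1 := LinearMap.finrank_range_add_finrank_ker (f ^ ν)
      have h2 := LinearMap.finrank_range_add_finrank_ker (f ^ (ν + 1))
      have hr1 : (A ^ ν).rank = Module.finrank ℂ (LinearMap.range (f ^ ν)) := by
        rw [Matrix.rank, hpow]
      have hr2 : (A ^ (ν + 1)).rank = Module.finrank ℂ (LinearMap.range (f ^ (ν + 1))) := by
        rw [Matrix.rank, hpow]
      have hkeq : Module.finrank ℂ (LinearMap.ker (f ^ (ν + 1)))
          ≤ Module.finrank ℂ (LinearMap.ker (f ^ ν)) := by omega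
      exact Submodule.eq_of_le_of_finrank_le hle hkeq
    have hker : ∀ m : ℕ, ν ≤ m → LinearMap.ker (f ^ m) = LinearMap.ker (f ^ ν) := by
      intro m hm
      obtain ⟨d, rfl⟩ := Nat.exists_eq_add_of_le hm
      exact (Module.End.ker_pow_constant hker0 d).symm
    -- from hann : B^t * M = 0, i.e. A^(u*t) * M = 0
    have hann' : A ^ (u * t) * M = 0 := by
      have := hann
      rw [_root_.map_mul, map_pow, aeval_X] at this
      rw [show A ^ (u * t) = B ^ t by rw [hB, pow_mul]]
      exact this
    -- conclude A^u * M = 0 via kernel equality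
    have hkeq : LinearMap.ker (f ^ (u * t)) = LinearMap.ker (f ^ u) := by
      rw [hker (u * t) (le_trans hu (Nat.le_mul_of_pos_right u ht)), hker u hu]
    have hcols : ∀ v : Fin n → ℂ, (A ^ u).mulVec (M.mulVec v) = 0 := by
      intro v
      have hmem : M.mulVec v ∈ LinearMap.ker (f ^ (u * t)) := by
        rw [← hpow]
        show (A ^ (u * t)).mulVecLin (M.mulVec v) = 0
        rw [Matrix.mulVecLin_apply, Matrix.mulVec_mulVec, hann', Matrix.zero_mulVec]
      rw [hkeq, ← hpow] at hmem
      simpa [Matrix.mulVecLin_apply] using hmem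
    have : (B * M).mulVecLin = 0 := by
      apply LinearMap.ext
      intro v
      simpa [Matrix.mulVecLin_apply, ← Matrix.mulVec_mulVec, hB] using hcols v
    have hinj : Function.Injective (Matrix.mulVecLin :
        Matrix (Fin n) (Fin n) ℂ → _) := by
      intro X Y h
      ext i j
      have := congrArg (fun g => g (Pi.single j 1) i) h
      simpa [Matrix.mulVecLin_apply, Matrix.mulVec_single] using this
    exact hinj (by simp [this])
  -- Step 2: deduce the three goals
  have hZM : Z = (ψ.coeff 0)⁻¹ • M := by
    rw [hZ, ← Polynomial.smul_eq_C_mul, _root_.map_smul, hM]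
  have h1 : B * Z = 0 := by
    rw [hZM, Matrix.mul_smul, key, smul_zero]
  have hcomm : M * B = B * M := by
    calc M * B = Polynomial.aeval B (ψ * X) := by rw [hM, _root_.map_mul, aeval_X]
      _ = Polynomial.aeval B (X * ψ) := by rw [mul_comm ψ X]
      _ = B * M := by rw [_root_.map_mul, aeval_X, hM]
  have h2 : Z * B = 0 := by
    rw [hZM, Matrix.smul_mul, hcomm, key, smul_zero]
  refine ⟨h1, h2, ?_⟩
  rw [_root_.map_mul, aeval_X, ← hZ]
  exact h1
end

section
/- Let A ∈ ℂ^{n×n}, ν = ind A, and let u ≥ ν be a nonnegative integer. Then for any nonzero polynomial φ(λ) = λ^t(λ^q + p₁λ^{q−1} + ⋯ + p_q) (with nonnegative integers t, q, coefficients p₁,…,p_q ∈ ℂ, p_q ≠ 0) annihilating A^u, the matrix Z = h(A^u), where h(λ) = p_q^{−1}(λ^q + p₁λ^{q−1} + ⋯ + p_q), is the eigenprojection of A: Z² = Z, the range of Z equals the null space of A^ν, and the null space of Z equals the range of A^ν. -/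
/-!
Since `rank (A ^ (ν + 1)) = rank (A ^ ν)`, the kernels of the powers of `A` stabilise from `ν` on,
which makes `ker (A ^ ν)` and `range (A ^ ν)` complementary. Let `W = ψ(A ^ u)`. As
`ker (A ^ ν) ⊆ ker (A ^ u)`, `W` acts on `ker (A ^ ν)` as the scalar `ψ(0)`. As `A ^ (u t) * W = 0`,
the range of `W` lies in `ker (A ^ (u t)) ⊆ ker (A ^ ν)`; and `W` commutes with `A ^ ν`, so it maps
`range (A ^ ν)` into itself, hence to zero. Thus `ψ(0)⁻¹ W` is the projection onto `ker (A ^ ν)`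
along `range (A ^ ν)`.
-/

open Matrix Polynomial

open Module LinearMap

namespace Module.End

theorem aeval_apply_of_apply_eq_zero {R M : Type*} [CommRing R] [AddCommGroup M] [Module R M]
    {g : End R M} {x : M} (hx : g x = 0) (p : R[X]) : aeval g p x = p.coeff 0 • x := by
  conv_lhs => rw [← divX_mul_X_add p]
  rw [map_add, map_mul, aeval_X, aeval_C, LinearMap.add_apply, mul_apply, hx, map_zero,
    zero_add, Module.algebraMap_end_apply]

variable {K V : Type*} [Field K] [AddCommGroup V] [Module K V] {f : End K V} {ν : ℕ}

theorem ker_pow_eq_of_le (h : ker (f ^ ν) = ker (f ^ (ν + 1))) {k : ℕ} (hk : ν ≤ k) :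
    ker (f ^ k) = ker (f ^ ν) := by
  obtain ⟨m, rfl⟩ := Nat.exists_eq_add_of_le hk
  exact (ker_pow_constant h m).symm

theorem disjoint_ker_pow_range_pow (h : ker (f ^ ν) = ker (f ^ (ν + 1))) :
    Disjoint (ker (f ^ ν)) (range (f ^ ν)) := by
  rw [disjoint_iff_inf_le]
  rintro _ ⟨hx, y, rfl⟩
  have hy : y ∈ ker (f ^ (ν + ν)) := by rwa [mem_ker, pow_add]
  rw [ker_pow_eq_of_le h le_self_add] at hy
  exact hy

section Annihilating

variable {u t : ℕ} {ψ : K[X]}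

theorem range_aeval_pow_le_ker_pow (h : ker (f ^ ν) = ker (f ^ (ν + 1)))
    (hann : aeval (f ^ u) (X ^ t * ψ) = 0) : range (aeval (f ^ u) ψ) ≤ ker (f ^ ν) := by
  rintro _ ⟨x, rfl⟩
  have hx : aeval (f ^ u) ψ x ∈ ker (f ^ (u * t)) := by
    rw [mem_ker, pow_mul, ← mul_apply, ← aeval_X_pow (R := K), ← map_mul, hann,
      LinearMap.zero_apply]
  rw [← ker_pow_eq_of_le h (le_max_left ν (u * t))]
  exact f.iterateKer.monotone (le_max_right _ _) hx

theorem aeval_pow_apply_eq_zero_of_mem_range_pow (h : ker (f ^ ν) = ker (f ^ (ν + 1)))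
    (hann : aeval (f ^ u) (X ^ t * ψ) = 0) {x : V} (hx : x ∈ range (f ^ ν)) :
    aeval (f ^ u) ψ x = 0 := by
  obtain ⟨y, rfl⟩ := hx
  have hcomm : aeval (f ^ u) ψ * f ^ ν = f ^ ν * aeval (f ^ u) ψ := by
    simpa [aeval_comp] using ((Commute.all (ψ.comp (X ^ u)) (X ^ ν)).map (aeval f)).eq
  refine disjoint_iff_inf_le.mp (disjoint_ker_pow_range_pow h)
    ⟨range_aeval_pow_le_ker_pow h hann (mem_range_self _ _), ?_⟩
  rw [← mul_apply, hcomm, mul_apply]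
  exact mem_range_self _ _

theorem aeval_pow_apply_of_mem_ker_pow (h : ker (f ^ ν) = ker (f ^ (ν + 1))) (hu : ν ≤ u)
    {x : V} (hx : x ∈ ker (f ^ ν)) : aeval (f ^ u) ψ x = ψ.coeff 0 • x := by
  rw [← ker_pow_eq_of_le h hu] at hx
  exact aeval_apply_of_apply_eq_zero hx ψ

end Annihilating

variable [FiniteDimensional K V]

theorem ker_pow_eq_ker_pow_succ_of_finrank_range_eq
    (h : finrank K (range (f ^ (ν + 1))) = finrank K (range (f ^ ν))) :
    ker (f ^ ν) = ker (f ^ (ν + 1)) := by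
  refine Submodule.eq_of_le_of_finrank_eq (f.iterateKer.monotone ν.le_succ) ?_
  have := finrank_range_add_finrank_ker (f ^ ν)
  have := finrank_range_add_finrank_ker (f ^ (ν + 1))
  omega

theorem isCompl_ker_pow_range_pow (h : ker (f ^ ν) = ker (f ^ (ν + 1))) :
    IsCompl (ker (f ^ ν)) (range (f ^ ν)) :=
  (Submodule.isCompl_iff_disjoint _ _ (by rw [add_comm, finrank_range_add_finrank_ker])).mpr
    (disjoint_ker_pow_range_pow h)

theorem aeval_pow_eq_smul_projection {u t : ℕ} {ψ : K[X]} (h : ker (f ^ ν) = ker (f ^ (ν + 1)))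
    (hu : ν ≤ u) (hann : aeval (f ^ u) (X ^ t * ψ) = 0) :
    aeval (f ^ u) ψ =
      ψ.coeff 0 • (ker (f ^ ν)).projection (range (f ^ ν)) (isCompl_ker_pow_range_pow h) := by
  refine ext_on_codisjoint (isCompl_ker_pow_range_pow h).codisjoint (fun x hx ↦ ?_)
    (fun x hx ↦ ?_)
  · simp [aeval_pow_apply_of_mem_ker_pow h hu hx, Submodule.projection_apply_of_mem_left _ hx]
  · simp [aeval_pow_apply_eq_zero_of_mem_range_pow h hann hx,
      Submodule.projection_apply_of_mem_right _ hx]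

end Module.End

open Module.End

theorem eigenprojection_of_annihilating_poly_general {n : ℕ} (A : Matrix (Fin n) (Fin n) ℂ)
    (ν u : ℕ) (hν : IsLeast {k : ℕ | (A ^ (k + 1)).rank = (A ^ k).rank} ν)
    (hu : ν ≤ u)
    (t : ℕ) (ψ : Polynomial ℂ) (hconst : ψ.coeff 0 ≠ 0)
    (hann : Polynomial.aeval (A ^ u) (Polynomial.X ^ t * ψ) = 0)
    (Z : Matrix (Fin n) (Fin n) ℂ)
    (hZ : Z = Polynomial.aeval (A ^ u) (Polynomial.C (ψ.coeff 0)⁻¹ * ψ)) :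
    Z * Z = Z ∧
    LinearMap.range Z.mulVecLin = LinearMap.ker (A ^ ν).mulVecLin ∧
    LinearMap.ker Z.mulVecLin = LinearMap.range (A ^ ν).mulVecLin := by
  set f := Matrix.toLinAlgEquiv' A
  have hpow (k : ℕ) : (A ^ k).mulVecLin = f ^ k := by rw [← map_pow]; rfl
  have hker : ker (f ^ ν) = ker (f ^ (ν + 1)) :=
    ker_pow_eq_ker_pow_succ_of_finrank_range_eq (by rw [← hpow, ← hpow]; exact hν.1)
  have hann' : aeval (f ^ u) (X ^ t * ψ) = 0 := by
    rw [← map_pow, aeval_algHom_apply, hann, map_zero]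
  have hZP : Matrix.toLinAlgEquiv' Z =
      (ker (f ^ ν)).projection (range (f ^ ν)) (isCompl_ker_pow_range_pow hker) := by
    rw [hZ, ← aeval_algHom_apply, map_pow, map_mul, aeval_C,
      aeval_pow_eq_smul_projection hker hu hann', Algebra.algebraMap_eq_smul_one, smul_mul_assoc,
      one_mul, smul_smul, inv_mul_cancel₀ hconst, one_smul]
  refine ⟨Matrix.toLinAlgEquiv'.injective ?_, ?_, ?_⟩
  · rw [map_mul, hZP]
    exact Submodule.isIdempotentElem_projection _
  · rw [hpow]
    exact (congrArg range hZP).trans (Submodule.range_projection _)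
  · rw [hpow]
    exact (congrArg ker hZP).trans (Submodule.ker_projection _)

/-- **Theorem 1.** Let `ν = ind A` and `u ≥ ν`. Then for any nonzero annihilating
polynomial `φ(λ) = λ^t · ψ(λ)` of `A ^ u`, where `ψ(λ) = λ^q + p₁λ^{q-1} + ⋯ + p_q`
is monic with nonzero constant term `p_q = ψ.coeff 0`, the matrix `Z = h(A ^ u)`,
with `h(λ) = p_q⁻¹ · ψ(λ)`, is the eigenprojection of `A`: it is idempotent, its range
is the null space of `A ^ ν`, and its null space is the range of `A ^ ν`. -/
theorem eigenprojection_of_annihilating_poly {n : ℕ} (A : Matrix (Fin n) (Fin n) ℂ)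
    (ν u : ℕ) (hν : IsLeast {k : ℕ | (A ^ (k + 1)).rank = (A ^ k).rank} ν)
    (hu : ν ≤ u)
    (t : ℕ) (ψ : Polynomial ℂ) (hmonic : ψ.Monic) (hconst : ψ.coeff 0 ≠ 0)
    (hann : Polynomial.aeval (A ^ u) (Polynomial.X ^ t * ψ) = 0)
    (Z : Matrix (Fin n) (Fin n) ℂ)
    (hZ : Z = Polynomial.aeval (A ^ u) (Polynomial.C (ψ.coeff 0)⁻¹ * ψ)) :
    Z * Z = Z ∧
    LinearMap.range Z.mulVecLin = LinearMap.ker (A ^ ν).mulVecLin ∧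
    LinearMap.ker Z.mulVecLin = LinearMap.range (A ^ ν).mulVecLin :=
  eigenprojection_of_annihilating_poly_general A ν u hν hu t ψ hconst hann Z hZ
end

section
/- Let A ∈ ℂ^{n×n}, let λ₁, …, λ_s be all the distinct eigenvalues of A, let ν_i = ind(A − λ_iI) be the index of λ_i, and let u₁, …, u_s be integers with u_i ≥ ν_i for each i. Let u ≥ ind A be an integer. Then the eigenprojection Z of A is given by Z = ∏_{i : λ_i ≠ 0} (I − (A/λ_i)^u)^{u_i}, where the product is over all indices i with λ_i ≠ 0 (the factors commute, so the order of the product is immaterial). -/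
open Matrix Polynomial

private lemma toAlgEq {n : ℕ} (B : Matrix (Fin n) (Fin n) ℂ) :
    Matrix.toLinAlgEquiv' B = B.mulVecLin := by
  ext v i
  simp [Matrix.toLinAlgEquiv'_apply, Matrix.mulVecLin_apply]

private lemma mulVecLinPow {n : ℕ} (B : Matrix (Fin n) (Fin n) ℂ) (k : ℕ) :
    (B ^ k).mulVecLin = B.mulVecLin ^ k := by
  rw [← toAlgEq, map_pow, toAlgEq]

private lemma kerPowMono {n : ℕ} (f : Module.End ℂ (Fin n → ℂ)) {a b : ℕ} (h : a ≤ b) :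
    LinearMap.ker (f ^ a) ≤ LinearMap.ker (f ^ b) := by
  obtain ⟨c, rfl⟩ := Nat.exists_eq_add_of_le h
  intro x hx
  rw [LinearMap.mem_ker] at hx ⊢
  rw [add_comm, pow_add, Module.End.mul_apply, hx, map_zero]

private lemma kerStable {n : ℕ} (B : Matrix (Fin n) (Fin n) ℂ) (k : ℕ)
    (h : (B ^ (k + 1)).rank = (B ^ k).rank) :
    ∀ m, k ≤ m →
      LinearMap.ker (B.mulVecLin ^ m) = LinearMap.ker (B.mulVecLin ^ k) := by
  set f := B.mulVecLin with hf
  have hrank : ∀ j, (B ^ j).rank = Module.finrank ℂ (LinearMap.range (f ^ j)) := by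
    intro j
    rw [Matrix.rank, mulVecLinPow]
  have hle : LinearMap.ker (f ^ k) ≤ LinearMap.ker (f ^ (k + 1)) :=
    kerPowMono f (Nat.le_succ k)
  have h1 := LinearMap.finrank_range_add_finrank_ker (f ^ k)
  have h2 := LinearMap.finrank_range_add_finrank_ker (f ^ (k + 1))
  have hr : Module.finrank ℂ (LinearMap.range (f ^ (k + 1)))
      = Module.finrank ℂ (LinearMap.range (f ^ k)) := by
    rw [← hrank, ← hrank, h]
  have hker : LinearMap.ker (f ^ k) = LinearMap.ker (f ^ (k + 1)) := by
    apply Submodule.eq_of_le_of_finrank_eq hle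
    omega
  have hconst := Module.End.ker_pow_constant (f := f) (k := k) hker
  intro m hm
  obtain ⟨c, rfl⟩ := Nat.exists_eq_add_of_le hm
  exact (hconst c).symm

private lemma smulOneEnd {n : ℕ} (c : ℂ) (f : Module.End ℂ (Fin n → ℂ)) :
    (aeval f) (C c) = c • (1 : Module.End ℂ (Fin n → ℂ)) := by
  rw [aeval_C, Algebra.algebraMap_eq_smul_one]

/-- The key annihilation lemma. -/
private lemma annihilation {n s : ℕ}
    (A : Matrix (Fin n) (Fin n) ℂ)
    (Λ : Fin s → ℂ)
    (hspec : Set.range Λ = spectrum ℂ A)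
    (νv : Fin s → ℕ)
    (hνv : ∀ i, IsLeast
      {k : ℕ | ((A - Λ i • 1) ^ (k + 1)).rank = ((A - Λ i • 1) ^ k).rank} (νv i))
    (ν : ℕ) (hν : IsLeast {k : ℕ | (A ^ (k + 1)).rank = (A ^ k).rank} ν) :
    Polynomial.aeval A
      (X ^ ν * ∏ i ∈ Finset.univ.filter (fun i => Λ i ≠ 0),
        (X - C (Λ i)) ^ νv i) = 0 := by
  set m : ℂ[X] := X ^ ν * ∏ i ∈ Finset.univ.filter (fun i => Λ i ≠ 0),
      (X - C (Λ i)) ^ νv i with hm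
  -- pass to the endomorphism
  set f : Module.End ℂ (Fin n → ℂ) := Matrix.toLinAlgEquiv' A with hfdef
  have hcomm : (aeval f) m = Matrix.toLinAlgEquiv' ((aeval A) m) := by
    rw [aeval_algEquiv]; rfl
  suffices hsuf : (aeval f) m = 0 by
    have := hcomm.symm.trans hsuf
    have h0 : Matrix.toLinAlgEquiv' ((aeval A) m)
        = Matrix.toLinAlgEquiv' (0 : Matrix (Fin n) (Fin n) ℂ) := by
      rw [this, map_zero]
    exact Matrix.toLinAlgEquiv'.injective h0
  -- the spectrum of f
  have hspecf : Set.range Λ = spectrum ℂ f := by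
    rw [hspec, hfdef, AlgEquiv.spectrum_eq]
  -- if Λ i = 0 then νv i = ν
  have hzero : ∀ i, Λ i = 0 → νv i = ν := by
    intro i hi
    have h1 := hνv i
    rw [hi] at h1
    simp only [zero_smul, sub_zero] at h1
    exact h1.unique hν
  -- key: each max generalized eigenspace is in the kernel
  have key : ∀ μ : ℂ, f.maxGenEigenspace μ ≤ LinearMap.ker ((aeval f) m) := by
    intro μ x hx
    rcases eq_or_ne x 0 with rfl | hx0
    · exact Submodule.zero_mem _
    obtain ⟨k, hk⟩ := (Module.End.mem_maxGenEigenspace f μ x).mp hx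
    -- μ is an eigenvalue
    have hμspec : μ ∈ Set.range Λ := by
      rw [hspecf, ← Module.End.hasEigenvalue_iff_mem_spectrum]
      apply Module.End.hasEigenvalue_of_hasGenEigenvalue (k := k)
      rw [Module.End.hasGenEigenvalue_iff]
      intro hbot
      apply hx0
      have hxk : x ∈ f.genEigenspace μ (k : ℕ∞) :=
        Module.End.mem_genEigenspace.mpr ⟨k, le_rfl, hk⟩
      rw [hbot] at hxk
      exact hxk
    obtain ⟨i, rfl⟩ := hμspec
    -- x is killed by (f - Λ i • 1) ^ νv i
    have hmv : (A - Λ i • 1).mulVecLin = f - Λ i • 1 := by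
      rw [hfdef, ← toAlgEq, _root_.map_sub]
      congr 1
      rw [_root_.map_smul, _root_.map_one]
    have hstab := kerStable (A - Λ i • 1) (νv i) (hνv i).1 (max k (νv i))
      (le_max_right _ _)
    rw [hmv] at hstab
    have hxk' : x ∈ LinearMap.ker ((f - Λ i • 1) ^ νv i) := by
      rw [← hstab]
      exact kerPowMono _ (le_max_left _ _) hk
    -- divisibility
    have hdvd : (X - C (Λ i)) ^ νv i ∣ m := by
      rcases eq_or_ne (Λ i) 0 with h0 | h0
      · rw [hm, h0, Polynomial.C_0, sub_zero, hzero i h0]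
        exact dvd_mul_right _ _
      · have hi : i ∈ Finset.univ.filter (fun i => Λ i ≠ 0) := by
          simp [h0]
        exact Dvd.dvd.mul_left (Finset.dvd_prod_of_mem _ hi) _
    obtain ⟨r, hr⟩ := hdvd
    rw [LinearMap.mem_ker, hr, mul_comm, _root_.map_mul, Module.End.mul_apply]
    have : (aeval f) ((X - C (Λ i)) ^ νv i) = (f - Λ i • 1) ^ νv i := by
      rw [_root_.map_pow, _root_.map_sub, aeval_X, smulOneEnd]
    rw [this, hxk', map_zero]
  rw [← LinearMap.ker_eq_top, eq_top_iff,
    ← Module.End.iSup_maxGenEigenspace_eq_top f]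
  exact iSup_le key

/-- **Proposition 2, Eq. (16).** Let `λ₁, …, λ_s` be all the distinct eigenvalues of
`A ∈ ℂ^{n×n}`, let `ν_i = ind (A − λ_i I)`, let `u_i ≥ ν_i`, and let `u ≥ ind A`. Then
the eigenprojection `Z` of `A` equals `∏_{i : λ_i ≠ 0} (I − (A/λ_i)^u)^{u_i}` (the
factors, being polynomials in `A`, commute; the product is expressed as the evaluation
at `A` of the product of the corresponding commuting polynomials). -/
theorem eigenprojection_formula_of_eigenvalues {n s : ℕ}
    (A : Matrix (Fin n) (Fin n) ℂ)
    (Λ : Fin s → ℂ) (hinj : Function.Injective Λ)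
    (hspec : Set.range Λ = spectrum ℂ A)
    (νv uv : Fin s → ℕ)
    (hνv : ∀ i, IsLeast
      {k : ℕ | ((A - Λ i • 1) ^ (k + 1)).rank = ((A - Λ i • 1) ^ k).rank} (νv i))
    (huv : ∀ i, νv i ≤ uv i)
    (ν u : ℕ) (hν : IsLeast {k : ℕ | (A ^ (k + 1)).rank = (A ^ k).rank} ν)
    (hu : ν ≤ u)
    (Z : Matrix (Fin n) (Fin n) ℂ)
    (hZ : Z = Polynomial.aeval A
      (∏ i ∈ Finset.univ.filter (fun i => Λ i ≠ 0),
        (1 - (Polynomial.C (Λ i)⁻¹ * Polynomial.X) ^ u) ^ uv i)) :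
    Z * Z = Z ∧
    LinearMap.range Z.mulVecLin = LinearMap.ker (A ^ ν).mulVecLin ∧
    LinearMap.ker Z.mulVecLin = LinearMap.range (A ^ ν).mulVecLin := by
  classical
  set p : ℂ[X] := ∏ i ∈ Finset.univ.filter (fun i => Λ i ≠ 0),
      (1 - (C (Λ i)⁻¹ * X) ^ u) ^ uv i with hp
  set q : ℂ[X] := ∏ i ∈ Finset.univ.filter (fun i => Λ i ≠ 0),
      (X - C (Λ i)) ^ νv i with hq
  have hm : (aeval A) (X ^ ν * q) = 0 := annihilation A Λ hspec νv hνv ν hν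
  -- Fact A : q ∣ p
  have factA : q ∣ p := by
    apply Finset.prod_dvd_prod_of_dvd
    intro i hi
    have h0 : Λ i ≠ 0 := by
      simpa using hi
    have h1 : (X - C (Λ i)) ∣ (1 - (C (Λ i)⁻¹ * X) ^ u) := by
      rw [dvd_iff_isRoot]
      simp [IsRoot, inv_mul_cancel₀ h0]
    calc (X - C (Λ i)) ^ νv i ∣ (1 - (C (Λ i)⁻¹ * X) ^ u) ^ νv i :=
          pow_dvd_pow_of_dvd h1 _
      _ ∣ (1 - (C (Λ i)⁻¹ * X) ^ u) ^ uv i := pow_dvd_pow _ (huv i)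
  -- Fact B : X ^ ν ∣ 1 - p
  have factB : (X : ℂ[X]) ^ ν ∣ 1 - p := by
    rw [hp]
    apply Finset.prod_induction _ (fun g => (X : ℂ[X]) ^ ν ∣ 1 - g)
    · intro a b ha hb
      have : 1 - a * b = (1 - a) + a * (1 - b) := by ring
      rw [this]
      exact dvd_add ha (Dvd.dvd.mul_left hb a)
    · simp
    · intro i _
      have h2 : (X : ℂ[X]) ^ ν ∣ (C (Λ i)⁻¹ * X) ^ u := by
        rw [mul_pow]
        exact Dvd.dvd.mul_left (pow_dvd_pow X hu) _
      have h3 : (C (Λ i)⁻¹ * X) ^ u ∣ 1 - (1 - (C (Λ i)⁻¹ * X) ^ u) ^ uv i := by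
        have := sub_dvd_pow_sub_pow (1 : ℂ[X]) (1 - (C (Λ i)⁻¹ * X) ^ u) (uv i)
        simpa using this
      exact h2.trans h3
  -- matrix-level identities
  have hZZ : Z * Z = Z := by
    have hdvd : X ^ ν * q ∣ p * p - p := by
      have h1 : p * p - p = ((p - 1) * X ^ 0) * p := by ring
      have : X ^ ν * q ∣ (p - 1) * p := by
        apply mul_dvd_mul _ factA
        rw [← dvd_neg, neg_sub]
        exact factB
      calc X ^ ν * q ∣ (p - 1) * p := this
        _ ∣ p * p - p := by rw [show p * p - p = (p - 1) * p by ring]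
    obtain ⟨d, hd⟩ := hdvd
    have : (aeval A) (p * p - p) = 0 := by
      rw [hd, _root_.map_mul, hm, zero_mul]
    rw [_root_.map_sub, _root_.map_mul] at this
    rw [hZ]
    rw [sub_eq_zero] at this
    exact this
  have hAZ : A ^ ν * Z = 0 := by
    have hdvd : X ^ ν * q ∣ X ^ ν * p := mul_dvd_mul_left _ factA
    obtain ⟨d, hd⟩ := hdvd
    have : (aeval A) (X ^ ν * p) = 0 := by rw [hd, _root_.map_mul, hm, zero_mul]
    rw [_root_.map_mul, map_pow, aeval_X] at this
    rw [hZ]; exact this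
  have hZA : Z * A ^ ν = 0 := by
    have hdvd : X ^ ν * q ∣ p * X ^ ν := by
      rw [mul_comm p (X ^ ν)]
      exact mul_dvd_mul_left _ factA
    obtain ⟨d, hd⟩ := hdvd
    have : (aeval A) (p * X ^ ν) = 0 := by rw [hd, _root_.map_mul, hm, zero_mul]
    rw [_root_.map_mul, map_pow, aeval_X] at this
    rw [hZ]; exact this
  obtain ⟨r, hr⟩ := factB
  -- 1 - Z = A^ν * R = R * A^ν
  set R : Matrix (Fin n) (Fin n) ℂ := (aeval A) r with hR
  have h1Z : (1 : Matrix (Fin n) (Fin n) ℂ) - Z = A ^ ν * R := by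
    have : (aeval A) (1 - p) = (aeval A) (X ^ ν * r) := by rw [hr]
    rw [_root_.map_sub, _root_.map_one, _root_.map_mul, map_pow, aeval_X] at this
    rw [hZ]; exact this
  have h1Z' : (1 : Matrix (Fin n) (Fin n) ℂ) - Z = R * A ^ ν := by
    have hr' : 1 - p = r * X ^ ν := by rw [hr]; ring
    have : (aeval A) (1 - p) = (aeval A) (r * X ^ ν) := by rw [hr']
    rw [_root_.map_sub, _root_.map_one, _root_.map_mul, map_pow, aeval_X] at this
    rw [hZ]; exact this
  refine ⟨hZZ, ?_, ?_⟩
  · apply le_antisymm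
    · rintro x ⟨y, rfl⟩
      rw [LinearMap.mem_ker, ← LinearMap.comp_apply, ← Matrix.mulVecLin_mul, hAZ]
      simp
    · intro x hx
      rw [LinearMap.mem_ker] at hx
      have hZx : Z.mulVecLin x = x := by
        have : ((1 : Matrix (Fin n) (Fin n) ℂ) - Z).mulVecLin x = 0 := by
          rw [h1Z', Matrix.mulVecLin_mul, LinearMap.comp_apply, hx, map_zero]
        have h2 : (1 : Matrix (Fin n) (Fin n) ℂ).mulVecLin x - Z.mulVecLin x = 0 := by
          rw [← this]
          simp [Matrix.sub_mulVec, Matrix.mulVecLin_apply]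
        rw [Matrix.mulVecLin_one] at h2
        have := sub_eq_zero.mp h2
        exact this.symm
      exact ⟨x, hZx⟩
  · apply le_antisymm
    · intro x hx
      rw [LinearMap.mem_ker] at hx
      refine ⟨R.mulVecLin x, ?_⟩
      rw [← LinearMap.comp_apply, ← Matrix.mulVecLin_mul, ← h1Z]
      have : ((1 : Matrix (Fin n) (Fin n) ℂ) - Z).mulVecLin x
          = (1 : Matrix (Fin n) (Fin n) ℂ).mulVecLin x - Z.mulVecLin x := by
        simp [Matrix.sub_mulVec, Matrix.mulVecLin_apply]
      rw [this, hx, Matrix.mulVecLin_one, sub_zero]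
      rfl
    · rintro x ⟨y, rfl⟩
      rw [LinearMap.mem_ker, ← LinearMap.comp_apply, ← Matrix.mulVecLin_mul, hZA]
      simp
end

section
/- Let A ∈ ℂ^{n×n}, let λ₁, …, λ_s be all the distinct eigenvalues of A, let ν_i = ind(A − λ_iI) be the index of λ_i, and let u₁, …, u_s be integers with u_i ≥ ν_i for each i. Then for each k ∈ {1, …, s}, the eigenprojection of A − λ_kI (the eigenprojection of A corresponding to the eigenvalue λ_k) is given by Z_{k0} = ∏_{i ≠ k} (I − ((A − λ_kI)/(λ_i − λ_k))^{u_k})^{u_i}, where the product is over all indices i ≠ k (the factors commute, so the order of the product is immaterial). -/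
open Matrix Polynomial Pointwise

private lemma aux_dvd_one_sub_pow {R : Type*} [CommRing R] (a : R) :
    ∀ m : ℕ, a ∣ 1 - (1 - a) ^ m
  | 0 => by simp
  | (m + 1) => by
    have h := aux_dvd_one_sub_pow a m
    have hring : 1 - (1 - a) ^ (m + 1) = (1 - (1 - a) ^ m) + (1 - a) ^ m * a := by ring
    rw [hring]
    exact dvd_add h (dvd_mul_left a _)

private lemma aux_dvd_one_sub_prod {R : Type*} [CommRing R] {ι : Type*} (d : R)
    (t : Finset ι) (f : ι → R) (h : ∀ i ∈ t, d ∣ 1 - f i) :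
    d ∣ 1 - ∏ i ∈ t, f i := by
  classical
  induction t using Finset.induction with
  | empty => simp
  | @insert a t hnotmem ih =>
    rw [Finset.prod_insert hnotmem]
    have h1 : d ∣ 1 - f a := h a (Finset.mem_insert_self a t)
    have h2 : d ∣ 1 - ∏ i ∈ t, f i := ih fun i hi => h i (Finset.mem_insert_of_mem hi)
    have hring : 1 - f a * ∏ i ∈ t, f i
        = (1 - f a) + f a * (1 - ∏ i ∈ t, f i) := by ring
    rw [hring]
    exact dvd_add h1 (h2.mul_left _)

/-- If the rank of powers of `M` stabilizes at `ν`, then the kernels of all powers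
`ν + m` agree with the kernel of the `ν`-th power. -/
private lemma aux_ker_pow_stab {n : ℕ} (M : Matrix (Fin n) (Fin n) ℂ) {ν : ℕ}
    (h : (M ^ (ν + 1)).rank = (M ^ ν).rank) (m : ℕ) :
    LinearMap.ker ((Matrix.toLinAlgEquiv' M) ^ (ν + m))
      = LinearMap.ker ((Matrix.toLinAlgEquiv' M) ^ ν) := by
  set g := Matrix.toLinAlgEquiv' M with hg
  have hpow : ∀ j : ℕ, (g ^ j : (Fin n → ℂ) →ₗ[ℂ] (Fin n → ℂ)) = (M ^ j).mulVecLin := by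
    intro j
    rw [hg, ← _root_.map_pow]
    rfl
  have hle : LinearMap.ker ((g : (Fin n → ℂ) →ₗ[ℂ] (Fin n → ℂ)) ^ ν)
      ≤ LinearMap.ker (g ^ (ν + 1)) := by
    intro x hx
    rw [LinearMap.mem_ker] at hx ⊢
    rw [pow_succ', Module.End.mul_apply, hx, _root_.map_zero]
  have r1 := LinearMap.finrank_range_add_finrank_ker
    ((g : (Fin n → ℂ) →ₗ[ℂ] (Fin n → ℂ)) ^ (ν + 1))
  have r2 := LinearMap.finrank_range_add_finrank_ker
    ((g : (Fin n → ℂ) →ₗ[ℂ] (Fin n → ℂ)) ^ ν)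
  have hrk : Module.finrank ℂ (LinearMap.range ((g : (Fin n → ℂ) →ₗ[ℂ] (Fin n → ℂ)) ^ (ν + 1)))
      = Module.finrank ℂ (LinearMap.range (g ^ ν)) := by
    rw [hpow, hpow]
    exact h
  have hfr : Module.finrank ℂ (LinearMap.ker ((g : (Fin n → ℂ) →ₗ[ℂ] (Fin n → ℂ)) ^ ν))
      = Module.finrank ℂ (LinearMap.ker (g ^ (ν + 1))) := by omega
  have base : LinearMap.ker ((g : (Fin n → ℂ) →ₗ[ℂ] (Fin n → ℂ)) ^ ν)
      = LinearMap.ker (g ^ (ν + 1)) :=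
    Submodule.eq_of_le_of_finrank_eq hle hfr
  exact (Module.End.ker_pow_constant base m).symm

set_option maxHeartbeats 1000000 in
/-- **Proposition 2, Eq. (17) with j = 0.** Let `λ₁, …, λ_s` be all the distinct
eigenvalues of `A ∈ ℂ^{n×n}`, let `ν_i = ind (A − λ_i I)`, and let `u_i ≥ ν_i`. Then
for each `k`, the eigenprojection of `A − λ_k I` equals
`∏_{i ≠ k} (I − ((A − λ_k I)/(λ_i − λ_k))^{u_k})^{u_i}` (the factors, being polynomials
in `A − λ_k I`, commute; the product is expressed as the evaluation at `A − λ_k I` of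
the product of the corresponding commuting polynomials). -/
theorem eigenprojection_at_eigenvalue_formula {n s : ℕ}
    (A : Matrix (Fin n) (Fin n) ℂ)
    (Λ : Fin s → ℂ) (hinj : Function.Injective Λ)
    (hspec : Set.range Λ = spectrum ℂ A)
    (νv uv : Fin s → ℕ)
    (hνv : ∀ i, IsLeast
      {j : ℕ | ((A - Λ i • 1) ^ (j + 1)).rank = ((A - Λ i • 1) ^ j).rank} (νv i))
    (huv : ∀ i, νv i ≤ uv i)
    (k : Fin s)
    (Z : Matrix (Fin n) (Fin n) ℂ)
    (hZ : Z = Polynomial.aeval (A - Λ k • 1)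
      (∏ i ∈ Finset.univ.erase k,
        (1 - (Polynomial.C (Λ i - Λ k)⁻¹ * Polynomial.X) ^ uv k) ^ uv i)) :
    Z * Z = Z ∧
    LinearMap.range Z.mulVecLin =
      LinearMap.ker ((A - Λ k • 1) ^ νv k).mulVecLin ∧
    LinearMap.ker Z.mulVecLin =
      LinearMap.range ((A - Λ k • 1) ^ νv k).mulVecLin := by
  classical
  set B : Matrix (Fin n) (Fin n) ℂ := A - Λ k • 1 with hB
  set μ : Fin s → ℂ := fun i => Λ i - Λ k with hμ
  have hμinj : Function.Injective μ := fun i j hij => hinj (by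
    have : Λ i - Λ k = Λ j - Λ k := hij
    linear_combination this)
  have hBi : ∀ i, B - μ i • (1 : Matrix (Fin n) (Fin n) ℂ) = A - Λ i • 1 := by
    intro i
    rw [hB, hμ]
    simp only [sub_smul]
    abel
  -- polynomials
  set p : Polynomial ℂ := ∏ i ∈ Finset.univ.erase k,
      (1 - (Polynomial.C (Λ i - Λ k)⁻¹ * Polynomial.X) ^ uv k) ^ uv i with hp
  set q : Polynomial ℂ := ∏ i ∈ Finset.univ.erase k, (X - C (μ i)) ^ νv i with hq
  set m₁ : Polynomial ℂ := ∏ i : Fin s, (X - C (μ i)) ^ νv i with hm₁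
  have hm₁q : m₁ = X ^ νv k * q := by
    rw [hm₁, hq, ← Finset.mul_prod_erase Finset.univ _ (Finset.mem_univ k)]
    congr 1
    rw [hμ]
    simp
  -- the endomorphism
  set g : (Fin n → ℂ) →ₗ[ℂ] (Fin n → ℂ) := Matrix.toLinAlgEquiv' B with hgdef
  have hei : ∀ i, Matrix.toLinAlgEquiv' (A - Λ i • 1) = g - μ i • 1 := by
    intro i
    rw [← hBi i, _root_.map_sub, hgdef]
    congr 1
    rw [_root_.map_smul, _root_.map_one]
  -- kernel stabilization for each eigenvalue
  have hstab : ∀ i (m : ℕ),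
      LinearMap.ker ((g - μ i • 1) ^ (νv i + m)) = LinearMap.ker ((g - μ i • 1) ^ νv i) := by
    intro i m
    have h1' : ((A - Λ i • 1) ^ (νv i + 1)).rank = ((A - Λ i • 1) ^ νv i).rank := (hνv i).1
    have := aux_ker_pow_stab (A - Λ i • 1) h1' m
    rwa [hei i] at this
  -- annihilation: aeval B m₁ = 0
  have hann : Polynomial.aeval B m₁ = 0 := by
    apply (Matrix.toLinAlgEquiv' (R := ℂ) (n := Fin n)).injective
    rw [_root_.map_zero, ← Polynomial.aeval_algHom_apply (Matrix.toLinAlgEquiv' (R := ℂ) (n := Fin n)) B m₁]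
    show Polynomial.aeval g m₁ = 0
    rw [← LinearMap.ker_eq_top, eq_top_iff, ← Module.End.iSup_maxGenEigenspace_eq_top g]
    apply iSup_le
    intro μ₀ x hx
    rw [Module.End.mem_maxGenEigenspace] at hx
    obtain ⟨j, hj⟩ := hx
    rw [LinearMap.mem_ker]
    by_cases hx0 : x = 0
    · rw [hx0, _root_.map_zero]
    -- μ₀ is an eigenvalue of g, hence μ₀ = μ i for some i
    have heig : Module.End.HasEigenvalue g μ₀ := by
      apply Module.End.hasEigenvalue_of_hasGenEigenvalue (k := j)
      rw [Module.End.hasGenEigenvalue_iff]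
      rw [Submodule.ne_bot_iff]
      refine ⟨x, ?_, hx0⟩
      rw [Module.End.mem_genEigenspace_nat, LinearMap.mem_ker]
      exact hj
    have hμ₀ : μ₀ ∈ spectrum ℂ B := by
      have h1 : μ₀ ∈ spectrum ℂ g := Module.End.hasEigenvalue_iff_mem_spectrum.mp heig
      rwa [hgdef, AlgEquiv.spectrum_eq] at h1
    have hspecB : spectrum ℂ B = spectrum ℂ A - ({Λ k} : Set ℂ) := by
      rw [hB, ← Algebra.algebraMap_eq_smul_one]
      exact (spectrum.sub_singleton_eq A (Λ k)).symm
    obtain ⟨a, ha, b, hb, hab⟩ : ∃ a ∈ spectrum ℂ A, ∃ b ∈ ({Λ k} : Set ℂ), a - b = μ₀ := by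
      rw [hspecB] at hμ₀
      exact Set.mem_sub.mp hμ₀
    rw [← hspec] at ha
    obtain ⟨i, hi⟩ := ha
    rw [Set.mem_singleton_iff] at hb
    have hμ₀i : μ₀ = μ i := by
      rw [← hab, hb]
      show a - Λ k = Λ i - Λ k
      rw [hi]
    -- now kill x with (g - μ i • 1)^{νv i}
    have hker : ((g - μ i • 1) ^ νv i) x = 0 := by
      have hx' : ((g - μ i • 1) ^ (νv i + j)) x = 0 := by
        rw [pow_add, Module.End.mul_apply]
        rw [hμ₀i] at hj
        rw [hj, _root_.map_zero]
      have := hstab i j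
      rw [← LinearMap.mem_ker, this] at hx'
      exact hx'
    have hsplit : m₁ = (∏ i' ∈ Finset.univ.erase i, (X - C (μ i')) ^ νv i')
        * (X - C (μ i)) ^ νv i := by
      rw [hm₁]
      exact (Finset.prod_erase_mul _ _ (Finset.mem_univ i)).symm
    rw [hsplit, _root_.map_mul, Module.End.mul_apply]
    have hfac : (Polynomial.aeval g) ((X - C (μ i)) ^ νv i) = (g - μ i • 1) ^ νv i := by
      rw [_root_.map_pow, _root_.map_sub, aeval_X, aeval_C, Module.algebraMap_end_eq_smul_id]
      rfl
    rw [hfac, hker, _root_.map_zero]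
  -- divisibility 1 : X^{uv k} ∣ 1 - p
  have hdvd1 : (X : Polynomial ℂ) ^ uv k ∣ 1 - p := by
    rw [hp]
    apply aux_dvd_one_sub_prod
    intro i _
    have h1 : (X : Polynomial ℂ) ^ uv k ∣ (C (Λ i - Λ k)⁻¹ * X) ^ uv k := by
      rw [mul_pow]
      exact dvd_mul_left _ _
    exact h1.trans (aux_dvd_one_sub_pow _ (uv i))
  -- divisibility 2 : q ∣ p
  have hdvd2 : q ∣ p := by
    rw [hq]
    apply Finset.prod_dvd_of_coprime
    · intro i _ j _ hij
      exact (Polynomial.pairwise_coprime_X_sub_C hμinj hij).pow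
    · intro i hi
      have hne : Λ i ≠ Λ k := hinj.ne (Finset.ne_of_mem_erase hi)
      have hμne : μ i ≠ 0 := by rw [hμ]; exact sub_ne_zero.mpr hne
      have hroot : (X - C (μ i)) ∣ (1 - (C (Λ i - Λ k)⁻¹ * X) ^ uv k) := by
        rw [dvd_iff_isRoot]
        show Polynomial.eval (μ i) _ = 0
        simp only [eval_sub, eval_one, eval_pow, eval_mul, eval_C, eval_X]
        rw [hμ]
        rw [show (Λ i - Λ k)⁻¹ * (Λ i - Λ k) = 1 from inv_mul_cancel₀ (sub_ne_zero.mpr hne)]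
        simp
      calc (X - C (μ i)) ^ νv i ∣ (X - C (μ i)) ^ uv i := pow_dvd_pow _ (huv i)
        _ ∣ (1 - (C (Λ i - Λ k)⁻¹ * X) ^ uv k) ^ uv i := pow_dvd_pow_of_dvd hroot _
        _ ∣ p := by rw [hp]; exact Finset.dvd_prod_of_mem _ (by simpa using hi)
  obtain ⟨r, hr⟩ := hdvd1
  obtain ⟨h, hh⟩ := hdvd2
  have huk : νv k + (uv k - νv k) = uv k := Nat.add_sub_cancel' (huv k)
  -- key: anything divisible by m₁ evaluates to 0 at B
  have key : ∀ f : Polynomial ℂ, m₁ ∣ f → Polynomial.aeval B f = 0 := by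
    rintro f ⟨w, rfl⟩
    rw [_root_.map_mul, hann, zero_mul]
  have hZp : Z = Polynomial.aeval B p := hZ
  -- idempotency
  have hZZ : Z * Z = Z := by
    have hdvd : m₁ ∣ p * p - p := by
      rw [show p * p - p = (p - 1) * p by ring, hm₁q]
      apply mul_dvd_mul
      · have h3 : (X : Polynomial ℂ) ^ νv k ∣ 1 - p := (pow_dvd_pow _ (huv k)).trans ⟨r, hr⟩
        rw [show p - 1 = -(1 - p) by ring]
        exact dvd_neg.mpr h3
      · exact ⟨h, hh⟩
    have := key _ hdvd
    rw [_root_.map_sub, _root_.map_mul, ← hZp] at this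
    exact sub_eq_zero.mp this
  -- matrix identities
  have haZB : B ^ νv k * Z = 0 := by
    have : Polynomial.aeval B (X ^ νv k * p) = 0 := by
      apply key
      rw [hm₁q, hh]
      exact ⟨h, by ring⟩
    rwa [_root_.map_mul, _root_.map_pow, aeval_X, ← hZp] at this
  have hbZB : Z * B ^ νv k = 0 := by
    have : Polynomial.aeval B (p * X ^ νv k) = 0 := by
      apply key
      rw [hm₁q, hh]
      exact ⟨h, by ring⟩
    rwa [_root_.map_mul, _root_.map_pow, aeval_X, ← hZp] at this
  -- 1 - Z factorizations
  have honeZ₁ : (1 : Matrix (Fin n) (Fin n) ℂ) - Z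
      = Polynomial.aeval B (r * X ^ (uv k - νv k)) * B ^ νv k := by
    have hpoly : 1 - p = (r * X ^ (uv k - νv k)) * X ^ νv k := by
      rw [hr, mul_comm (X ^ uv k) r, mul_assoc, ← pow_add]
      rw [show uv k - νv k + νv k = uv k by omega]
    have := congrArg (Polynomial.aeval B) hpoly
    rwa [_root_.map_sub, _root_.map_one, _root_.map_mul, _root_.map_pow, aeval_X, ← hZp] at this
  have honeZ₂ : (1 : Matrix (Fin n) (Fin n) ℂ) - Z
      = B ^ νv k * Polynomial.aeval B (X ^ (uv k - νv k) * r) := by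
    have hpoly : 1 - p = X ^ νv k * (X ^ (uv k - νv k) * r) := by
      rw [hr, ← mul_assoc, ← pow_add, huk]
    have := congrArg (Polynomial.aeval B) hpoly
    rwa [_root_.map_sub, _root_.map_one, _root_.map_mul, _root_.map_pow, aeval_X, ← hZp] at this
  refine ⟨hZZ, ?_, ?_⟩
  -- range Z = ker B^ν
  · ext x
    simp only [LinearMap.mem_range, LinearMap.mem_ker, Matrix.mulVecLin_apply]
    constructor
    · rintro ⟨y, rfl⟩
      rw [Matrix.mulVec_mulVec, haZB, Matrix.zero_mulVec]
    · intro hx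
      refine ⟨x, ?_⟩
      have h1 : ((1 : Matrix (Fin n) (Fin n) ℂ) - Z) *ᵥ x = 0 := by
        rw [honeZ₁, ← Matrix.mulVec_mulVec, hx, Matrix.mulVec_zero]
      rw [Matrix.sub_mulVec, Matrix.one_mulVec, sub_eq_zero] at h1
      exact h1.symm
  -- ker Z = range B^ν
  · ext x
    simp only [LinearMap.mem_range, LinearMap.mem_ker, Matrix.mulVecLin_apply]
    constructor
    · intro hx
      refine ⟨Polynomial.aeval B (X ^ (uv k - νv k) * r) *ᵥ x, ?_⟩
      rw [Matrix.mulVec_mulVec, ← honeZ₂, Matrix.sub_mulVec, Matrix.one_mulVec, hx, sub_zero]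
    · rintro ⟨y, rfl⟩
      rw [Matrix.mulVec_mulVec, hbZB, Matrix.zero_mulVec]
end

section
/- Let A ∈ ℂ^{n×n} with ν = ind A ≥ 1, and let Z be the eigenprojection of A. Then the matrix A^ν + Z is invertible, and D = A^{ν−1}·((A^ν + Z)^{−1} − Z) is the Drazin inverse of A; that is, D satisfies A·D = D·A, D·A·D = D, and A^{ν+1}·D = A^ν. -/
open Matrix

lemma ext_mulVec_aux {n : ℕ} {X Y : Matrix (Fin n) (Fin n) ℂ}
    (h : ∀ v, X.mulVec v = Y.mulVec v) : X = Y := by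
  ext i j
  have := congrFun (h (Pi.single j 1)) i
  simpa [Matrix.mulVec_single_one] using this

/-- If `ν = ind A ≥ 1` and `Z` is the eigenprojection of `A`, then `A^ν + Z` is
invertible and `D = A^{ν−1} · ((A^ν + Z)⁻¹ − Z)` is the Drazin inverse of `A`:
it commutes with `A`, satisfies `D·A·D = D`, and `A^{ν+1}·D = A^ν`. -/
theorem drazin_inverse_via_eigenprojection {n : ℕ} (A : Matrix (Fin n) (Fin n) ℂ)
    (ν : ℕ) (hν : IsLeast {k : ℕ | (A ^ (k + 1)).rank = (A ^ k).rank} ν)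
    (hν1 : 1 ≤ ν)
    (Z : Matrix (Fin n) (Fin n) ℂ)
    (hidem : Z * Z = Z)
    (hrange : LinearMap.range Z.mulVecLin = LinearMap.ker (A ^ ν).mulVecLin)
    (hker : LinearMap.ker Z.mulVecLin = LinearMap.range (A ^ ν).mulVecLin)
    (D : Matrix (Fin n) (Fin n) ℂ)
    (hD : D = A ^ (ν - 1) * ((A ^ ν + Z)⁻¹ - Z)) :
    IsUnit (A ^ ν + Z) ∧
    A * D = D * A ∧ D * A * D = D ∧ A ^ (ν + 1) * D = A ^ ν := by
  set M : Matrix (Fin n) (Fin n) ℂ := A ^ ν with hM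
  -- Z acts as identity on ker M
  have hZfix : ∀ x, M.mulVec x = 0 → Z.mulVec x = x := by
    intro x hx
    have hx' : x ∈ LinearMap.range Z.mulVecLin := by
      rw [hrange]; simpa [Matrix.mulVecLin_apply] using hx
    obtain ⟨y, hy⟩ := hx'
    rw [Matrix.mulVecLin_apply] at hy
    rw [← hy, Matrix.mulVec_mulVec, hidem]
  -- Z * M = 0
  have hZM : Z * M = 0 := by
    apply ext_mulVec_aux
    intro v
    have : M.mulVec v ∈ LinearMap.ker Z.mulVecLin := by
      rw [hker]; exact ⟨v, by simp [Matrix.mulVecLin_apply]⟩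
    simpa [← Matrix.mulVec_mulVec, Matrix.mulVecLin_apply] using this
  -- M * Z = 0
  have hMZ : M * Z = 0 := by
    apply ext_mulVec_aux
    intro v
    have : Z.mulVec v ∈ LinearMap.ker M.mulVecLin := by
      rw [← hrange]; exact ⟨v, by simp [Matrix.mulVecLin_apply]⟩
    simpa [← Matrix.mulVec_mulVec, Matrix.mulVecLin_apply] using this
  -- A commutes with M and Z
  have hAM : A * M = M * A := by
    rw [hM, ← pow_succ', ← pow_succ]
  have hZAZ : Z * (A * Z) = A * Z := by
    apply ext_mulVec_aux
    intro v
    have key : M * (A * Z) = 0 := by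
      rw [← mul_assoc, ← hAM, mul_assoc, hMZ, mul_zero]
    rw [← Matrix.mulVec_mulVec]
    apply hZfix
    rw [Matrix.mulVec_mulVec, key, Matrix.zero_mulVec]
  have hZA1Z : Z * (A * (1 - Z)) = 0 := by
    apply ext_mulVec_aux
    intro v
    have h1 : (1 - Z).mulVec v ∈ LinearMap.range M.mulVecLin := by
      rw [← hker]
      simp [Matrix.mulVecLin_apply, Matrix.mulVec_mulVec, mul_sub, hidem]
    obtain ⟨y, hy⟩ := h1
    rw [Matrix.mulVecLin_apply] at hy
    have key2 : Z * A * M = 0 := by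
      rw [mul_assoc, hAM, ← mul_assoc, hZM, zero_mul]
    rw [← Matrix.mulVec_mulVec, ← Matrix.mulVec_mulVec, ← hy,
      Matrix.mulVec_mulVec, Matrix.mulVec_mulVec, key2,
      Matrix.zero_mulVec, Matrix.zero_mulVec]
  have hAZ : A * Z = Z * A := by
    have h2 : Z * A = Z * (A * Z) + Z * (A * (1 - Z)) := by noncomm_ring
    rw [h2, hZAZ, hZA1Z, add_zero]
  -- Invertibility of S = M + Z
  set S : Matrix (Fin n) (Fin n) ℂ := M + Z with hS
  have hZS : Z * S = Z := by rw [hS, mul_add, hZM, hidem, zero_add]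
  have hSZ : S * Z = Z := by rw [hS, add_mul, hMZ, hidem, zero_add]
  have hSunit : IsUnit S := by
    rw [← Matrix.mulVec_injective_iff_isUnit]
    rw [show S.mulVec = S.mulVecLin from rfl]
    rw [← LinearMap.ker_eq_bot]
    rw [Submodule.eq_bot_iff]
    intro v hv
    rw [LinearMap.mem_ker, Matrix.mulVecLin_apply] at hv
    have hzv : Z.mulVec v = 0 := by
      have := congrArg (Z.mulVec) hv
      rwa [Matrix.mulVec_mulVec, hZS, Matrix.mulVec_zero] at this
    have hmv : M.mulVec v = 0 := by
      have : M.mulVec v + Z.mulVec v = 0 := by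
        rw [← Matrix.add_mulVec]; exact hv
      rwa [hzv, add_zero] at this
    have := hZfix v hmv
    rw [hzv] at this
    exact this.symm
  refine ⟨hSunit, ?_⟩
  -- inverse identities
  set B : Matrix (Fin n) (Fin n) ℂ := S⁻¹ with hB
  have hSB : S * B = 1 := Matrix.mul_nonsing_inv S (Matrix.isUnit_iff_isUnit_det S |>.mp hSunit)
  have hBS : B * S = 1 := Matrix.nonsing_inv_mul S (Matrix.isUnit_iff_isUnit_det S |>.mp hSunit)
  have hZB : Z * B = Z := by
    calc Z * B = (Z * S) * B := by rw [hZS]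
    _ = Z * (S * B) := by rw [mul_assoc]
    _ = Z := by rw [hSB, mul_one]
  have hBZ : B * Z = Z := by
    calc B * Z = B * (S * Z) := by rw [hSZ]
    _ = (B * S) * Z := by rw [mul_assoc]
    _ = Z := by rw [hBS, one_mul]
  have hMS : M * S = S * M := by
    rw [hS, mul_add, add_mul, hMZ, hZM]
  have hBM : B * M = M * B := by
    calc B * M = B * M * (S * B) := by rw [hSB, mul_one]
    _ = B * (M * S) * B := by noncomm_ring
    _ = B * (S * M) * B := by rw [hMS]
    _ = (B * S) * (M * B) := by noncomm_ring
    _ = M * B := by rw [hBS, one_mul]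
  have hBM1 : B * M = 1 - Z := by
    have : B * M + B * Z = 1 := by rw [← mul_add, ← hS, hBS]
    rw [hBZ] at this
    linear_combination (norm := noncomm_ring) this
  have hAB : A * B = B * A := by
    have hAS : A * S = S * A := by rw [hS, mul_add, add_mul, hAM, hAZ]
    calc A * B = (B * S) * (A * B) := by rw [hBS, one_mul]
    _ = B * (S * A) * B := by noncomm_ring
    _ = B * (A * S) * B := by rw [hAS]
    _ = (B * A) * (S * B) := by noncomm_ring
    _ = B * A := by rw [hSB, mul_one]
  -- key: D = A^{ν-1} * (B - Z)
  have hpow : A * A ^ (ν - 1) = M := by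
    rw [hM, ← pow_succ']
    congr 1
    omega
  have hpow' : A ^ (ν - 1) * A = M := by
    rw [hM, ← pow_succ]
    congr 1
    omega
  have hAD : A * D = (1 : Matrix (Fin n) (Fin n) ℂ) - Z := by
    rw [hD, ← mul_assoc, hpow, mul_sub, ← hBM, hBM1, hMZ, sub_zero]
  -- A commutes with powers, so A commutes with D
  have hApowZ : A ^ (ν - 1) * Z = Z * A ^ (ν - 1) := by
    induction (ν - 1) with
    | zero => simp
    | succ k ih =>
      rw [pow_succ, mul_assoc, hAZ, ← mul_assoc, ih, mul_assoc]
  have hApowB : A ^ (ν - 1) * B = B * A ^ (ν - 1) := by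
    induction (ν - 1) with
    | zero => simp
    | succ k ih =>
      rw [pow_succ, mul_assoc, hAB, ← mul_assoc, ih, mul_assoc]
  have hDA : D * A = (1 : Matrix (Fin n) (Fin n) ℂ) - Z := by
    rw [hD]
    calc A ^ (ν - 1) * (B - Z) * A = A ^ (ν - 1) * (B - Z) * A := rfl
    _ = (B - Z) * (A ^ (ν - 1) * A) := by
        rw [mul_sub, hApowB, hApowZ, sub_mul, sub_mul, mul_assoc, mul_assoc]
    _ = (B - Z) * M := by rw [hpow']
    _ = B * M - Z * M := by rw [sub_mul]
    _ = 1 - Z := by rw [hBM1, hZM, sub_zero]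
  have hZD : Z * D = 0 := by
    rw [hD, ← mul_assoc, ← hApowZ, mul_assoc, mul_sub, hZB, hidem,
      sub_self, mul_zero]
  refine ⟨by rw [hAD, hDA], ?_, ?_⟩
  · rw [hDA, sub_mul, one_mul, hZD, sub_zero]
  · rw [pow_succ, ← hM, mul_assoc, hAD, mul_sub, mul_one, hMZ, sub_zero]
end
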